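/- Fix n > 2. Define unit-cost delete-free STRIPS tasks P₁ and P₂ over facts p(x,y) for x,y ∈ [n], goal {p(n,y) : y ∈ [n]}, empty initial state, and shared actions a(1,y) (empty precondition, adds p(1,y)) and a(x,y) for 2 ≤ x ≤ n−1 (precondition {p(x−1,y)}, adds p(x,y)). P₁ additionally has actions a₁(y,z) for y,z ∈ [n] with precondition {p(n−1,y)} adding p(n,y); P₂ instead has actions a₂(y,z) with precondition {p(n−1,z)} adding p(n,y). Then the optimal plan cost of P₁ is n² and the optimal plan cost of P₂ is 2n−1. -/

import Mathlib

/-- A propositional STRIPS action over a type `P` of propositions. -/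
structure StripsAct (P : Type) where
  pre : Set P
  add : Set P
  del : Set P

/-- Successor state of applying action `a` in state `s`. -/
def stSucc {P : Type} (s : Set P) (a : StripsAct P) : Set P := (s \ a.del) ∪ a.add

/-- The state reached after executing a list of actions from `s`. -/
def stExec {P : Type} (s : Set P) : List (StripsAct P) → Set P
  | [] => s
  | a :: rest => stExec (stSucc s a) rest

/-- Every action in the sequence is applicable in the state reached so far. -/
def AppSeq {P : Type} (s : Set P) : List (StripsAct P) → Prop
  | [] => True
  | a :: rest => a.pre ⊆ s ∧ AppSeq (stSucc s a) rest

/-- `π` is a plan for the task `⟨P, A, s₀, G⟩`. -/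
def IsPlan {P : Type} (A : Set (StripsAct P)) (s0 G : Set P) (π : List (StripsAct P)) : Prop :=
  (∀ a ∈ π, a ∈ A) ∧ AppSeq s0 π ∧ G ⊆ stExec s0 π

/-- Cost of a unit-cost plan: its length, as an element of `ℕ∞`. -/
def planLen {P : Type} (π : List (StripsAct P)) : ℕ∞ := (π.length : ℕ)

/-- Optimal plan cost (number of actions) of a task (`⊤` if unsolvable). -/
noncomputable def hStarLen {P : Type} (A : Set (StripsAct P)) (s0 G : Set P) : ℕ∞ :=
  sInf {m : ℕ∞ | ∃ π, IsPlan A s0 G π ∧ m = planLen π}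

/-- The actions shared by the two tasks: `a(1,y)` with empty precondition adding
`p(1,y)`, and `a(x,y)` for `2 ≤ x ≤ n-1` with precondition `{p(x-1,y)}` adding `p(x,y)`. -/
def sharedActs (n : ℕ) : Set (StripsAct (ℕ × ℕ)) :=
  {a | ∃ y ∈ Finset.Icc 1 n, a = ⟨∅, {(1, y)}, ∅⟩} ∪
  {a | ∃ x ∈ Finset.Icc 2 (n - 1), ∃ y ∈ Finset.Icc 1 n,
        a = ⟨{(x - 1, y)}, {(x, y)}, ∅⟩}

/-- The extra actions `a₁(y,z)` of `P₁`: precondition `{p(n-1,y)}`, adding `p(n,y)`. -/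
def extra1 (n : ℕ) : Set (StripsAct (ℕ × ℕ)) :=
  {a | ∃ y ∈ Finset.Icc 1 n, ∃ _z ∈ Finset.Icc 1 n, a = ⟨{(n - 1, y)}, {(n, y)}, ∅⟩}

/-- The extra actions `a₂(y,z)` of `P₂`: precondition `{p(n-1,z)}`, adding `p(n,y)`. -/
def extra2 (n : ℕ) : Set (StripsAct (ℕ × ℕ)) :=
  {a | ∃ y ∈ Finset.Icc 1 n, ∃ z ∈ Finset.Icc 1 n, a = ⟨{(n - 1, z)}, {(n, y)}, ∅⟩}

/-- The common goal `{p(n,y) : y ∈ [n]}`. -/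
def goalN (n : ℕ) : Set (ℕ × ℕ) := {p | ∃ y ∈ Finset.Icc 1 n, p = (n, y)}

namespace Stmt6

abbrev Act := StripsAct (ℕ × ℕ)

lemma stSucc_df (s : Set (ℕ × ℕ)) (a : Act) (h : a.del = ∅) : stSucc s a = s ∪ a.add := by
  simp [stSucc, h]

lemma subset_stSucc (s : Set (ℕ × ℕ)) (a : Act) (h : a.del = ∅) : s ⊆ stSucc s a := by
  rw [stSucc_df s a h]; exact Set.subset_union_left

lemma stExec_append (s : Set (ℕ × ℕ)) (π₁ π₂ : List Act) :
    stExec s (π₁ ++ π₂) = stExec (stExec s π₁) π₂ := by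
  induction π₁ generalizing s with
  | nil => simp [stExec]
  | cons a t ih => simp [stExec, ih]

lemma appSeq_append {s : Set (ℕ × ℕ)} {π₁ π₂ : List Act} :
    AppSeq s (π₁ ++ π₂) ↔ AppSeq s π₁ ∧ AppSeq (stExec s π₁) π₂ := by
  induction π₁ generalizing s with
  | nil => simp [AppSeq, stExec]
  | cons a t ih => simp [AppSeq, stExec, ih, and_assoc]

lemma mem_stExec {s : Set (ℕ × ℕ)} {π : List Act} (hdf : ∀ a ∈ π, a.del = ∅) {f : ℕ × ℕ} :
    f ∈ stExec s π ↔ f ∈ s ∨ ∃ a ∈ π, f ∈ a.add := by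
  induction π generalizing s with
  | nil => simp [stExec]
  | cons a t ih =>
    rw [show stExec s (a :: t) = stExec (stSucc s a) t from rfl,
      ih (fun b hb => hdf b (List.mem_cons_of_mem a hb)),
      stSucc_df s a (hdf a (List.mem_cons_self))]
    constructor
    · rintro ((h | h) | ⟨b, hb, h⟩)
      · exact Or.inl h
      · exact Or.inr ⟨a, List.mem_cons_self, h⟩
      · exact Or.inr ⟨b, List.mem_cons_of_mem a hb, h⟩
    · rintro (h | ⟨b, hb, h⟩)
      · exact Or.inl (Or.inl h)
      · rcases List.mem_cons.1 hb with rfl | hb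
        · exact Or.inl (Or.inr h)
        · exact Or.inr ⟨b, hb, h⟩

lemma subset_stExec {s : Set (ℕ × ℕ)} {π : List Act} (hdf : ∀ a ∈ π, a.del = ∅) :
    s ⊆ stExec s π := fun f hf => (mem_stExec hdf).2 (Or.inl hf)

lemma pre_subset {s : Set (ℕ × ℕ)} {π : List Act} (hdf : ∀ a ∈ π, a.del = ∅)
    (happ : AppSeq s π) : ∀ a ∈ π, a.pre ⊆ stExec s π := by
  induction π generalizing s with
  | nil => simp
  | cons b t ih =>
    intro a ha
    rcases List.mem_cons.1 ha with rfl | ha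
    · exact happ.1.trans ((subset_stSucc s a (hdf a (List.mem_cons_self))).trans
        (subset_stExec (fun c hc => hdf c (List.mem_cons_of_mem a hc))))
    · exact ih (fun c hc => hdf c (List.mem_cons_of_mem b hc)) happ.2 a ha

lemma appSeq_of_pre {s : Set (ℕ × ℕ)} {π : List Act} (hdf : ∀ a ∈ π, a.del = ∅)
    (h : ∀ a ∈ π, a.pre ⊆ s) : AppSeq s π := by
  induction π generalizing s with
  | nil => trivial
  | cons a t ih =>
    refine ⟨h a (List.mem_cons_self), ih (fun c hc => hdf c (List.mem_cons_of_mem a hc))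
      (fun c hc => (h c (List.mem_cons_of_mem a hc)).trans
        (subset_stSucc s a (hdf a (List.mem_cons_self))))⟩

end Stmt6
namespace Stmt6

def act1 (y : ℕ) : Act := ⟨∅, {(1, y)}, ∅⟩
def actx (x y : ℕ) : Act := ⟨{(x - 1, y)}, {(x, y)}, ∅⟩

def chain (y : ℕ) : ℕ → List Act
  | 0 => []
  | k + 1 => chain y k ++ [if k = 0 then act1 y else actx (k + 1) y]

lemma chain_length (y k : ℕ) : (chain y k).length = k := by
  induction k with
  | zero => rfl
  | succ k ih => simp [chain, ih]

lemma chain_df (y k : ℕ) : ∀ a ∈ chain y k, a.del = ∅ := by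
  induction k with
  | zero => simp [chain]
  | succ k ih =>
    intro a ha
    rcases List.mem_append.1 ha with h | h
    · exact ih a h
    · simp only [List.mem_singleton] at h
      subst h; split <;> rfl

lemma chain_mem_shared {n y k : ℕ} (hy : y ∈ Finset.Icc 1 n) (hk : k ≤ n - 1) :
    ∀ a ∈ chain y k, a ∈ sharedActs n := by
  induction k with
  | zero => simp [chain]
  | succ k ih =>
    intro a ha
    rcases List.mem_append.1 ha with h | h
    · exact ih (le_trans (Nat.le_succ k) hk) a h
    · simp only [List.mem_singleton] at h
      subst h
      split
      · exact Or.inl ⟨y, hy, rfl⟩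
      · next h0 =>
        refine Or.inr ⟨k + 1, ?_, y, hy, rfl⟩
        simp only [Finset.mem_Icc]
        exact ⟨Nat.succ_le_succ (Nat.one_le_iff_ne_zero.2 h0), hk⟩

lemma chain_hasTop {y k : ℕ} (hk : 1 ≤ k) : ∃ a ∈ chain y k, (k, y) ∈ a.add := by
  obtain ⟨j, rfl⟩ : ∃ j, k = j + 1 := ⟨k - 1, (Nat.succ_pred_eq_of_pos hk).symm⟩
  rcases Nat.eq_zero_or_pos j with rfl | hj
  · exact ⟨act1 y, by simp [chain], by simp [act1]⟩
  · have h0 : ¬ (j = 0) := Nat.pos_iff_ne_zero.1 hj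
    exact ⟨actx (j + 1) y, by simp [chain, h0], by simp [actx]⟩

lemma chain_app (y k : ℕ) (s : Set (ℕ × ℕ)) : AppSeq s (chain y k) := by
  induction k generalizing s with
  | zero => trivial
  | succ k ih =>
    rw [chain, appSeq_append]
    refine ⟨ih s, ?_⟩
    rcases Nat.eq_zero_or_pos k with rfl | hk
    · exact ⟨by simp [act1], trivial⟩
    · have : ¬ (k = 0) := Nat.pos_iff_ne_zero.1 hk
      simp only [this, if_false]
      refine ⟨?_, trivial⟩
      intro f hf
      simp only [actx, Nat.add_sub_cancel, Set.mem_singleton_iff] at hf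
      subst hf
      obtain ⟨a, ha, hadd⟩ := chain_hasTop (y := y) hk
      exact (mem_stExec (chain_df y k)).2 (Or.inr ⟨a, ha, hadd⟩)

end Stmt6
namespace Stmt6

def e1act (n y : ℕ) : Act := ⟨{(n - 1, y)}, {(n, y)}, ∅⟩
def e2act (n y : ℕ) : Act := ⟨{(n - 1, 1)}, {(n, y)}, ∅⟩

def block1 (n y : ℕ) : List Act := chain y (n - 1) ++ [e1act n y]

def plan1aux (n : ℕ) : ℕ → List Act
  | 0 => []
  | m + 1 => plan1aux n m ++ block1 n (m + 1)

def tail2 (n : ℕ) : ℕ → List Act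
  | 0 => []
  | m + 1 => tail2 n m ++ [e2act n (m + 1)]

def plan2 (n : ℕ) : List Act := chain 1 (n - 1) ++ tail2 n n

lemma block1_df (n y : ℕ) : ∀ a ∈ block1 n y, a.del = ∅ := by
  intro a ha
  rcases List.mem_append.1 ha with h | h
  · exact chain_df y (n - 1) a h
  · simp only [List.mem_singleton] at h; subst h; rfl

lemma plan1aux_df (n m : ℕ) : ∀ a ∈ plan1aux n m, a.del = ∅ := by
  induction m with
  | zero => simp [plan1aux]
  | succ m ih =>
    intro a ha
    rcases List.mem_append.1 ha with h | h
    · exact ih a h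
    · exact block1_df n (m + 1) a h

lemma tail2_df (n m : ℕ) : ∀ a ∈ tail2 n m, a.del = ∅ := by
  induction m with
  | zero => simp [tail2]
  | succ m ih =>
    intro a ha
    rcases List.mem_append.1 ha with h | h
    · exact ih a h
    · simp only [List.mem_singleton] at h; subst h; rfl

lemma plan2_df (n : ℕ) : ∀ a ∈ plan2 n, a.del = ∅ := by
  intro a ha
  rcases List.mem_append.1 ha with h | h
  · exact chain_df 1 (n - 1) a h
  · exact tail2_df n n a h

lemma block1_length (n y : ℕ) (hn : 1 ≤ n) : (block1 n y).length = n := by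
  simp [block1, chain_length, Nat.sub_add_cancel hn]

lemma plan1aux_length (n m : ℕ) (hn : 1 ≤ n) : (plan1aux n m).length = m * n := by
  induction m with
  | zero => simp [plan1aux]
  | succ m ih => simp [plan1aux, ih, block1_length n _ hn, Nat.succ_mul]

lemma tail2_length (n m : ℕ) : (tail2 n m).length = m := by
  induction m with
  | zero => rfl
  | succ m ih => simp [tail2, ih]

lemma plan2_length (n : ℕ) (hn : 1 ≤ n) : (plan2 n).length = 2 * n - 1 := by
  simp only [plan2, List.length_append, chain_length, tail2_length]
  omega

lemma block1_app (n y : ℕ) (hn : 2 ≤ n) (s : Set (ℕ × ℕ)) : AppSeq s (block1 n y) := by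
  rw [block1, appSeq_append]
  refine ⟨chain_app y (n - 1) s, ?_, trivial⟩
  intro f hf
  simp only [e1act, Set.mem_singleton_iff] at hf
  subst hf
  obtain ⟨a, ha, hadd⟩ := chain_hasTop (y := y) (k := n - 1) (by omega)
  exact (mem_stExec (chain_df y (n - 1))).2 (Or.inr ⟨a, ha, hadd⟩)

lemma plan1aux_app (n m : ℕ) (hn : 2 ≤ n) (s : Set (ℕ × ℕ)) : AppSeq s (plan1aux n m) := by
  induction m generalizing s with
  | zero => trivial
  | succ m ih => rw [plan1aux, appSeq_append]; exact ⟨ih s, block1_app n (m + 1) hn _⟩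

lemma tail2_pre (n m : ℕ) : ∀ a ∈ tail2 n m, a.pre = {(n - 1, 1)} := by
  induction m with
  | zero => simp [tail2]
  | succ m ih =>
    intro a ha
    rcases List.mem_append.1 ha with h | h
    · exact ih a h
    · simp only [List.mem_singleton] at h; subst h; rfl

lemma plan2_app (n : ℕ) (hn : 2 ≤ n) (s : Set (ℕ × ℕ)) : AppSeq s (plan2 n) := by
  rw [plan2, appSeq_append]
  refine ⟨chain_app 1 (n - 1) s, appSeq_of_pre (tail2_df n n) ?_⟩
  intro a ha
  rw [tail2_pre n n a ha]
  intro f hf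
  simp only [Set.mem_singleton_iff] at hf
  subst hf
  obtain ⟨b, hb, hadd⟩ := chain_hasTop (y := 1) (k := n - 1) (by omega)
  exact (mem_stExec (chain_df 1 (n - 1))).2 (Or.inr ⟨b, hb, hadd⟩)

lemma block1_mem {n y : ℕ} (hy : y ∈ Finset.Icc 1 n) :
    ∀ a ∈ block1 n y, a ∈ sharedActs n ∪ extra1 n := by
  intro a ha
  rcases List.mem_append.1 ha with h | h
  · exact Or.inl (chain_mem_shared hy le_rfl a h)
  · simp only [List.mem_singleton] at h; subst h
    exact Or.inr ⟨y, hy, y, hy, rfl⟩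

lemma plan1aux_mem {n m : ℕ} (hm : m ≤ n) :
    ∀ a ∈ plan1aux n m, a ∈ sharedActs n ∪ extra1 n := by
  induction m with
  | zero => simp [plan1aux]
  | succ m ih =>
    intro a ha
    rcases List.mem_append.1 ha with h | h
    · exact ih (by omega) a h
    · exact block1_mem (by simp only [Finset.mem_Icc]; omega) a h

lemma tail2_mem {n m : ℕ} (hn : 1 ≤ n) (hm : m ≤ n) :
    ∀ a ∈ tail2 n m, a ∈ extra2 n := by
  induction m with
  | zero => simp [tail2]
  | succ m ih =>
    intro a ha
    rcases List.mem_append.1 ha with h | h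
    · exact ih (by omega) a h
    · simp only [List.mem_singleton] at h; subst h
      exact ⟨m + 1, by simp only [Finset.mem_Icc]; omega, 1,
        by simp only [Finset.mem_Icc]; omega, rfl⟩

lemma plan2_mem {n : ℕ} (hn : 1 ≤ n) : ∀ a ∈ plan2 n, a ∈ sharedActs n ∪ extra2 n := by
  intro a ha
  rcases List.mem_append.1 ha with h | h
  · exact Or.inl (chain_mem_shared (by simp only [Finset.mem_Icc]; omega) le_rfl a h)
  · exact Or.inr (tail2_mem hn le_rfl a h)

lemma plan1aux_hasGoal {n m y : ℕ} (h1 : 1 ≤ y) (h2 : y ≤ m) :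
    ∃ a ∈ plan1aux n m, (n, y) ∈ a.add := by
  induction m with
  | zero => omega
  | succ m ih =>
    rcases Nat.lt_or_ge y (m + 1) with h | h
    · obtain ⟨a, ha, hadd⟩ := ih (by omega)
      exact ⟨a, List.mem_append.2 (Or.inl ha), hadd⟩
    · have : y = m + 1 := by omega
      subst this
      exact ⟨e1act n (m + 1), List.mem_append.2 (Or.inr (List.mem_append.2 (Or.inr
        (List.mem_singleton.2 rfl)))), by simp [e1act]⟩

lemma tail2_hasGoal {n m y : ℕ} (h1 : 1 ≤ y) (h2 : y ≤ m) :
    ∃ a ∈ tail2 n m, (n, y) ∈ a.add := by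
  induction m with
  | zero => omega
  | succ m ih =>
    rcases Nat.lt_or_ge y (m + 1) with h | h
    · obtain ⟨a, ha, hadd⟩ := ih (by omega)
      exact ⟨a, List.mem_append.2 (Or.inl ha), hadd⟩
    · have : y = m + 1 := by omega
      subst this
      exact ⟨e2act n (m + 1), List.mem_append.2 (Or.inr (List.mem_singleton.2 rfl)), by simp [e2act]⟩

lemma plan1_isPlan {n : ℕ} (hn : 2 < n) :
    IsPlan (sharedActs n ∪ extra1 n) (∅ : Set (ℕ × ℕ)) (goalN n) (plan1aux n n) := by
  refine ⟨plan1aux_mem le_rfl, plan1aux_app n n (by omega) _, ?_⟩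
  rintro p ⟨y, hy, rfl⟩
  simp only [Finset.mem_Icc] at hy
  obtain ⟨a, ha, hadd⟩ := plan1aux_hasGoal (n := n) hy.1 hy.2
  exact (mem_stExec (plan1aux_df n n)).2 (Or.inr ⟨a, ha, hadd⟩)

lemma plan2_isPlan {n : ℕ} (hn : 2 < n) :
    IsPlan (sharedActs n ∪ extra2 n) (∅ : Set (ℕ × ℕ)) (goalN n) (plan2 n) := by
  refine ⟨plan2_mem (by omega), plan2_app n (by omega) _, ?_⟩
  rintro p ⟨y, hy, rfl⟩
  simp only [Finset.mem_Icc] at hy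
  obtain ⟨a, ha, hadd⟩ := tail2_hasGoal (n := n) hy.1 hy.2
  exact (mem_stExec (plan2_df n)).2
    (Or.inr ⟨a, List.mem_append.2 (Or.inr ha), hadd⟩)

end Stmt6
namespace Stmt6

open Classical in
noncomputable def addFact (a : Act) : ℕ × ℕ :=
  if h : ∃ p, a.add = {p} then h.choose else (0, 0)

lemma addFact_spec {a : Act} (h : ∃ p, a.add = {p}) : a.add = {addFact a} := by
  rw [addFact, dif_pos h]; exact h.choose_spec

lemma shared_single {n : ℕ} {a : Act} (h : a ∈ sharedActs n) : ∃ p, a.add = {p} := by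
  rcases h with ⟨y, _, rfl⟩ | ⟨x, _, y, _, rfl⟩
  · exact ⟨(1, y), rfl⟩
  · exact ⟨(x, y), rfl⟩

lemma extra1_single {n : ℕ} {a : Act} (h : a ∈ extra1 n) : ∃ p, a.add = {p} := by
  rcases h with ⟨y, _, z, _, rfl⟩; exact ⟨(n, y), rfl⟩

lemma extra2_single {n : ℕ} {a : Act} (h : a ∈ extra2 n) : ∃ p, a.add = {p} := by
  rcases h with ⟨y, _, z, _, rfl⟩; exact ⟨(n, y), rfl⟩

lemma shared_df {n : ℕ} {a : Act} (h : a ∈ sharedActs n) : a.del = ∅ := by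
  rcases h with ⟨y, _, rfl⟩ | ⟨x, _, y, _, rfl⟩ <;> rfl

lemma extra1_df {n : ℕ} {a : Act} (h : a ∈ extra1 n) : a.del = ∅ := by
  rcases h with ⟨y, _, z, _, rfl⟩; rfl

lemma extra2_df {n : ℕ} {a : Act} (h : a ∈ extra2 n) : a.del = ∅ := by
  rcases h with ⟨y, _, z, _, rfl⟩; rfl

lemma card_le_length {π : List Act} (hdf : ∀ a ∈ π, a.del = ∅)
    (hsingle : ∀ a ∈ π, ∃ p, a.add = {p}) {T : Finset (ℕ × ℕ)}
    (hT : ∀ p ∈ T, p ∈ stExec (∅ : Set (ℕ × ℕ)) π) : T.card ≤ π.length := by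
  have hsub : T ⊆ (π.map addFact).toFinset := by
    intro p hp
    have h := (mem_stExec hdf).1 (hT p hp)
    rcases h with h | ⟨a, ha, hadd⟩
    · exact absurd h (Set.notMem_empty p)
    · rw [addFact_spec (hsingle a ha), Set.mem_singleton_iff] at hadd
      rw [List.mem_toFinset, List.mem_map]
      exact ⟨a, ha, hadd.symm⟩
  calc T.card ≤ (π.map addFact).toFinset.card := Finset.card_le_card hsub
    _ ≤ (π.map addFact).length := (π.map addFact).toFinset_card_le
    _ = π.length := List.length_map addFact

section LB

variable {n : ℕ} {π : List Act}

lemma closure1 (hmem : ∀ a ∈ π, a ∈ sharedActs n ∪ extra1 n) (happ : AppSeq (∅ : Set (ℕ × ℕ)) π)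
    {x y : ℕ} (hx : 2 ≤ x) (h : (x, y) ∈ stExec (∅ : Set (ℕ × ℕ)) π) :
    (x - 1, y) ∈ stExec (∅ : Set (ℕ × ℕ)) π := by
  have hdf : ∀ a ∈ π, a.del = ∅ := fun a ha =>
    (hmem a ha).elim shared_df extra1_df
  rcases (mem_stExec hdf).1 h with h0 | ⟨a, ha, hadd⟩
  · exact absurd h0 (Set.notMem_empty _)
  have hpre := pre_subset hdf happ a ha
  rcases hmem a ha with (⟨y', hy', rfl⟩ | ⟨x', hx', y', hy', rfl⟩) | ⟨y', hy', z', hz', rfl⟩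
  · simp only [Set.mem_singleton_iff, Prod.mk.injEq] at hadd
    omega
  · simp only [Set.mem_singleton_iff, Prod.mk.injEq] at hadd
    obtain ⟨rfl, rfl⟩ := hadd
    exact hpre rfl
  · simp only [Set.mem_singleton_iff, Prod.mk.injEq] at hadd
    obtain ⟨rfl, rfl⟩ := hadd
    exact hpre rfl

lemma closure2_top (hn : 2 < n) (hmem : ∀ a ∈ π, a ∈ sharedActs n ∪ extra2 n) (happ : AppSeq (∅ : Set (ℕ × ℕ)) π)
    {y : ℕ} (h : (n, y) ∈ stExec (∅ : Set (ℕ × ℕ)) π) :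
    ∃ z ∈ Finset.Icc 1 n, (n - 1, z) ∈ stExec (∅ : Set (ℕ × ℕ)) π := by
  have hdf : ∀ a ∈ π, a.del = ∅ := fun a ha => (hmem a ha).elim shared_df extra2_df
  rcases (mem_stExec hdf).1 h with h0 | ⟨a, ha, hadd⟩
  · exact absurd h0 (Set.notMem_empty _)
  have hpre := pre_subset hdf happ a ha
  rcases hmem a ha with (⟨y', hy', rfl⟩ | ⟨x', hx', y', hy', rfl⟩) | ⟨y', hy', z', hz', rfl⟩
  · simp only [Set.mem_singleton_iff, Prod.mk.injEq] at hadd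
    omega
  · simp only [Set.mem_singleton_iff, Prod.mk.injEq] at hadd
    simp only [Finset.mem_Icc] at hx'
    omega
  · exact ⟨z', hz', hpre rfl⟩

lemma closure2_mid (hmem : ∀ a ∈ π, a ∈ sharedActs n ∪ extra2 n) (happ : AppSeq (∅ : Set (ℕ × ℕ)) π)
    {x y : ℕ} (hx : 2 ≤ x) (hxn : x ≤ n - 1) (h : (x, y) ∈ stExec (∅ : Set (ℕ × ℕ)) π) :
    (x - 1, y) ∈ stExec (∅ : Set (ℕ × ℕ)) π := by
  have hdf : ∀ a ∈ π, a.del = ∅ := fun a ha => (hmem a ha).elim shared_df extra2_df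
  rcases (mem_stExec hdf).1 h with h0 | ⟨a, ha, hadd⟩
  · exact absurd h0 (Set.notMem_empty _)
  have hpre := pre_subset hdf happ a ha
  rcases hmem a ha with (⟨y', hy', rfl⟩ | ⟨x', hx', y', hy', rfl⟩) | ⟨y', hy', z', hz', rfl⟩
  · simp only [Set.mem_singleton_iff, Prod.mk.injEq] at hadd
    omega
  · simp only [Set.mem_singleton_iff, Prod.mk.injEq] at hadd
    obtain ⟨rfl, rfl⟩ := hadd
    exact hpre rfl
  · simp only [Set.mem_singleton_iff, Prod.mk.injEq] at hadd
    omega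

end LB

end Stmt6
namespace Stmt6

lemma lb1 {n : ℕ} (hn : 2 < n) {π : List Act}
    (hp : IsPlan (sharedActs n ∪ extra1 n) (∅ : Set (ℕ × ℕ)) (goalN n) π) :
    n ^ 2 ≤ π.length := by
  obtain ⟨hmem, happ, hgoal⟩ := hp
  have hdf : ∀ a ∈ π, a.del = ∅ := fun a ha => (hmem a ha).elim shared_df extra1_df
  have hsingle : ∀ a ∈ π, ∃ p, a.add = {p} :=
    fun a ha => (hmem a ha).elim shared_single extra1_single
  have hall : ∀ x y : ℕ, 1 ≤ x → x ≤ n → 1 ≤ y → y ≤ n →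
      (x, y) ∈ stExec (∅ : Set (ℕ × ℕ)) π := by
    intro x y hx1 hxn hy1 hyn
    have key : ∀ j, j ≤ n - 1 → (n - j, y) ∈ stExec (∅ : Set (ℕ × ℕ)) π := by
      intro j
      induction j with
      | zero =>
        intro _
        simpa using hgoal ⟨y, by simp only [Finset.mem_Icc]; omega, rfl⟩
      | succ j ih =>
        intro hj
        have h1 := ih (by omega)
        have h2 : 2 ≤ n - j := by omega
        have h3 := closure1 hmem happ h2 h1
        have he : n - (j + 1) = n - j - 1 := by omega
        rw [he]; exact h3
    have h4 := key (n - x) (by omega)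
    have he : n - (n - x) = x := by omega
    rwa [he] at h4
  have hcard := card_le_length hdf hsingle
      (T := (Finset.Icc 1 n) ×ˢ (Finset.Icc 1 n)) ?_
  · have hc : ((Finset.Icc 1 n) ×ˢ (Finset.Icc 1 n)).card = n * n := by
      simp [Finset.card_product, Nat.card_Icc]
    have hp2 : n ^ 2 = n * n := by ring
    omega
  · rintro ⟨x, y⟩ hxy
    simp only [Finset.mem_product, Finset.mem_Icc] at hxy
    exact hall x y hxy.1.1 hxy.1.2 hxy.2.1 hxy.2.2

lemma lb2 {n : ℕ} (hn : 2 < n) {π : List Act}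
    (hp : IsPlan (sharedActs n ∪ extra2 n) (∅ : Set (ℕ × ℕ)) (goalN n) π) :
    2 * n - 1 ≤ π.length := by
  obtain ⟨hmem, happ, hgoal⟩ := hp
  have hdf : ∀ a ∈ π, a.del = ∅ := fun a ha => (hmem a ha).elim shared_df extra2_df
  have hsingle : ∀ a ∈ π, ∃ p, a.add = {p} :=
    fun a ha => (hmem a ha).elim shared_single extra2_single
  have htop : ∀ y : ℕ, 1 ≤ y → y ≤ n → (n, y) ∈ stExec (∅ : Set (ℕ × ℕ)) π := fun y h1 h2 =>
    hgoal ⟨y, by simp only [Finset.mem_Icc]; omega, rfl⟩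
  obtain ⟨z, hz, hz1⟩ := closure2_top hn hmem happ (htop 1 le_rfl (by omega))
  simp only [Finset.mem_Icc] at hz
  have key : ∀ j, j ≤ n - 2 → (n - 1 - j, z) ∈ stExec (∅ : Set (ℕ × ℕ)) π := by
    intro j
    induction j with
    | zero => intro _; simpa using hz1
    | succ j ih =>
      intro hj
      have h1 := ih (by omega)
      have h2 : 2 ≤ n - 1 - j := by omega
      have h3 : n - 1 - j ≤ n - 1 := by omega
      have h4 := closure2_mid hmem happ h2 h3 h1
      have he : n - 1 - (j + 1) = n - 1 - j - 1 := by omega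
      rw [he]; exact h4
  have hchain : ∀ x : ℕ, 1 ≤ x → x ≤ n - 1 → (x, z) ∈ stExec (∅ : Set (ℕ × ℕ)) π := by
    intro x h1 h2
    have h4 := key (n - 1 - x) (by omega)
    have he : n - 1 - (n - 1 - x) = x := by omega
    rwa [he] at h4
  have hdisj : Disjoint ((Finset.Icc 1 (n - 1)).image fun j => ((j, z) : ℕ × ℕ))
      ((Finset.Icc 1 n).image fun y => ((n, y) : ℕ × ℕ)) := by
    rw [Finset.disjoint_left]
    rintro ⟨a, b⟩ h1 h2
    simp only [Finset.mem_image, Finset.mem_Icc, Prod.mk.injEq] at h1 h2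
    obtain ⟨j, hj, hja, hzb⟩ := h1
    obtain ⟨y, hy, hna, hyb⟩ := h2
    omega
  have hcard := card_le_length hdf hsingle
      (T := ((Finset.Icc 1 (n - 1)).image fun j => ((j, z) : ℕ × ℕ)) ∪
            ((Finset.Icc 1 n).image fun y => ((n, y) : ℕ × ℕ))) ?_
  · rw [Finset.card_union_of_disjoint hdisj,
      Finset.card_image_of_injective _ (fun a b h => congrArg Prod.fst h),
      Finset.card_image_of_injective _ (fun a b h => congrArg Prod.snd h)] at hcard
    simp only [Nat.card_Icc] at hcard
    omega
  · rintro ⟨a, b⟩ hab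
    rcases Finset.mem_union.1 hab with h | h
    · simp only [Finset.mem_image, Finset.mem_Icc, Prod.mk.injEq] at h
      obtain ⟨j, hj, rfl, rfl⟩ := h
      exact hchain j hj.1 hj.2
    · simp only [Finset.mem_image, Finset.mem_Icc, Prod.mk.injEq] at h
      obtain ⟨y, hy, rfl, rfl⟩ := h
      exact htop y hy.1 hy.2

end Stmt6

/-- For `n > 2`, the optimal plan cost of `P₁` is `n²` and that of `P₂` is `2n - 1`. -/
theorem stmt_6 (n : ℕ) (hn : 2 < n) :
    hStarLen (sharedActs n ∪ extra1 n) (∅ : Set (ℕ × ℕ)) (goalN n) = ((n ^ 2 : ℕ) : ℕ∞) ∧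
    hStarLen (sharedActs n ∪ extra2 n) (∅ : Set (ℕ × ℕ)) (goalN n) = ((2 * n - 1 : ℕ) : ℕ∞) := by
  constructor
  · apply le_antisymm
    · apply sInf_le
      refine ⟨Stmt6.plan1aux n n, Stmt6.plan1_isPlan hn, ?_⟩
      rw [planLen, Stmt6.plan1aux_length n n (by omega)]
      norm_cast
      ring
    · apply le_sInf
      rintro m ⟨π, hplan, rfl⟩
      rw [planLen]
      exact_mod_cast Stmt6.lb1 hn hplan
  · apply le_antisymm
    · apply sInf_le
      refine ⟨Stmt6.plan2 n, Stmt6.plan2_isPlan hn, ?_⟩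
      rw [planLen, Stmt6.plan2_length n (by omega)]
    · apply le_sInf
      rintro m ⟨π, hplan, rfl⟩
      rw [planLen]
      exact_mod_cast Stmt6.lb2 hn hplan
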